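/- For every finite undirected graph H = ⟨U, D⟩, define the bipartite edge-colored graph G_H as follows: its vertices are v_ε and v'_ε for each v ∈ U and ε ∈ {m, n, r, g, b} (the unprimed vertices forming the left part and the primed vertices the right part); its green edges are (v_m, v'_r), (v_m, v'_b), (v_n, v'_b), (v_n, v'_g), (v_r, v'_m), (v_b, v'_m), (v_b, v'_n), (v_g, v'_n) for each v ∈ U; its blue edges are (v_ε, v'_δ) for each v ∈ U and each pair ε ≠ δ with ε, δ ∈ {r, g, b}, together with (v_ε, u'_ε) for each ε ∈ {r, g, b} and each pair u, v ∈ U with {u, v} ∈ D. Then H is 3-colorable if and only if G_H has the max-V-free property. -/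
import Mathlib


/-- The five labels `m, n, r, g, b` used to build the bipartite edge-colored graph `G_H`. -/
inductive Lbl : Type
  | m | n | r | g | b
deriving DecidableEq

/-- A set `M` of edges of a bipartite graph (pairs (left vertex, right vertex)) is
"V-free" if no two of its edges share a left endpoint or a right endpoint. -/
def IsVMatching {L R : Type*} (M : Set (L × R)) : Prop :=
  ∀ e ∈ M, ∀ e' ∈ M, (e.1 = e'.1 ∨ e.2 = e'.2) → e = e'

/-- The bipartite edge-colored graph with edge set `E` and blue edges `B ⊆ E` has the
max-V-free property: there is `M ⊆ E` which is V-free, maximal under inclusion among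
V-free subsets of `E`, and disjoint from `B`. -/
def MaxVFree {L R : Type*} (E B : Set (L × R)) : Prop :=
  ∃ M ⊆ E, IsVMatching M ∧ M ∩ B = ∅ ∧
    ∀ M' ⊆ E, IsVMatching M' → M ⊆ M' → M' = M

/-- Green edges of `G_H`: `(v_m, v'_r), (v_m, v'_b), (v_n, v'_b), (v_n, v'_g),
(v_r, v'_m), (v_b, v'_m), (v_b, v'_n), (v_g, v'_n)` for each vertex `v` of `H`. -/
def greenEdges (U : Type*) : Set ((U × Lbl) × U × Lbl) :=
  {x | ∃ v : U,
    x = ((v, Lbl.m), (v, Lbl.r)) ∨ x = ((v, Lbl.m), (v, Lbl.b)) ∨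
    x = ((v, Lbl.n), (v, Lbl.b)) ∨ x = ((v, Lbl.n), (v, Lbl.g)) ∨
    x = ((v, Lbl.r), (v, Lbl.m)) ∨ x = ((v, Lbl.b), (v, Lbl.m)) ∨
    x = ((v, Lbl.b), (v, Lbl.n)) ∨ x = ((v, Lbl.g), (v, Lbl.n))}

/-- Blue edges of `G_H`: `(v_ε, v'_δ)` for `ε ≠ δ`, `ε, δ ∈ {r,g,b}`, and `(v_ε, u'_ε)`
for `ε ∈ {r,g,b}` and `{u,v}` an edge of `H`. -/
def blueEdges {U : Type*} (H : SimpleGraph U) : Set ((U × Lbl) × U × Lbl) :=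
  {x | (∃ (v : U) (ε δ : Lbl), ε ∈ ({Lbl.r, Lbl.g, Lbl.b} : Set Lbl) ∧
          δ ∈ ({Lbl.r, Lbl.g, Lbl.b} : Set Lbl) ∧ ε ≠ δ ∧ x = ((v, ε), (v, δ))) ∨
       (∃ (u v : U) (ε : Lbl), ε ∈ ({Lbl.r, Lbl.g, Lbl.b} : Set Lbl) ∧ H.Adj u v ∧
          x = ((v, ε), (u, ε)))}

lemma block_or {L R : Type*} {Eset M : Set (L × R)} (hME : M ⊆ Eset)
    (hM : IsVMatching M)
    (hmax : ∀ M' ⊆ Eset, IsVMatching M' → M ⊆ M' → M' = M)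
    {x : L × R} (hx : x ∈ Eset) :
    x ∈ M ∨ ∃ e ∈ M, x.1 = e.1 ∨ x.2 = e.2 := by
  by_cases hxM : x ∈ M
  · exact Or.inl hxM
  · right
    by_contra h
    push_neg at h
    have hins : insert x M = M := by
      apply hmax _ (Set.insert_subset hx hME)
      · intro e he e' he' hsh
        rcases he with rfl | he
        · rcases he' with rfl | he'
          · rfl
          · exact absurd hsh (by have := h e' he'; tauto)
        · rcases he' with rfl | he'
          · have := h e he
            rcases hsh with h1 | h1
            · exact absurd h1.symm this.1
            · exact absurd h1.symm this.2
          · exact hM e he e' he' hsh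
      · exact Set.subset_insert _ _
    exact hxM (hins ▸ Set.mem_insert x M)

lemma maximal_of_blocked {L R : Type*} {Eset M : Set (L × R)}
    (hblock : ∀ x ∈ Eset, x ∉ M → ∃ e ∈ M, x.1 = e.1 ∨ x.2 = e.2) :
    ∀ M' ⊆ Eset, IsVMatching M' → M ⊆ M' → M' = M := by
  intro M' hM'E hM' hMM'
  apply Set.Subset.antisymm _ hMM'
  intro x hxM'
  by_contra hxM
  obtain ⟨e, heM, hsh⟩ := hblock x (hM'E hxM') hxM
  exact hxM ((hM' x hxM' e (hMM' heM) hsh) ▸ heM)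

def pqL : Lbl → Lbl × Lbl
  | .r => (.b, .g)
  | .g => (.r, .b)
  | _ => (.r, .g)

def toLbl : Fin 3 → Lbl := ![.r, .g, .b]

def confSet {U : Type*} (f : U → Fin 3) : Set ((U × Lbl) × U × Lbl) :=
  {x | ∃ v : U,
    x = ((v, Lbl.m), (v, (pqL (toLbl (f v))).1)) ∨
    x = ((v, Lbl.n), (v, (pqL (toLbl (f v))).2)) ∨
    x = ((v, (pqL (toLbl (f v))).1), (v, Lbl.m)) ∨
    x = ((v, (pqL (toLbl (f v))).2), (v, Lbl.n))}

lemma conf_sub_green {U : Type*} (f : U → Fin 3) : confSet f ⊆ greenEdges U := by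
  rintro x ⟨v, hx⟩
  refine ⟨v, ?_⟩
  obtain ⟨k, hk⟩ : ∃ k, f v = k := ⟨_, rfl⟩
  fin_cases k <;> simp_all [pqL, toLbl] <;> tauto

lemma conf_matching {U : Type*} (f : U → Fin 3) : IsVMatching (confSet f) := by
  rintro e ⟨v, hv⟩ e' ⟨w, hw⟩ hsh
  obtain ⟨kv, hkv⟩ : ∃ k, f v = k := ⟨_, rfl⟩
  obtain ⟨kw, hkw⟩ : ∃ k, f w = k := ⟨_, rfl⟩
  fin_cases kv <;> fin_cases kw <;>
    rcases hv with rfl|rfl|rfl|rfl <;> rcases hw with rfl|rfl|rfl|rfl <;>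
    simp_all [pqL, toLbl, Prod.ext_iff]

lemma conf_disjoint {U : Type*} (H : SimpleGraph U) (f : U → Fin 3) :
    confSet f ∩ blueEdges H = ∅ := by
  ext x
  simp only [Set.mem_inter_iff, Set.mem_empty_iff_false, iff_false, not_and]
  rintro ⟨v, hv⟩ hb
  obtain ⟨k, hk⟩ : ∃ k, f v = k := ⟨_, rfl⟩
  rcases hb with ⟨w, ε, δ, hε, hδ, hne, hx⟩ | ⟨u, w, ε, hε, hadj, hx⟩ <;>
    fin_cases k <;> rcases hv with rfl|rfl|rfl|rfl <;>
    simp_all [pqL, toLbl, Prod.ext_iff] <;> aesop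

lemma toLbl_cases (k : Fin 3) :
    toLbl k = Lbl.r ∨ toLbl k = Lbl.g ∨ toLbl k = Lbl.b := by
  fin_cases k <;> simp [toLbl]

lemma toLbl_inj : Function.Injective toLbl := by decide

lemma conf_blocked {U : Type*} (H : SimpleGraph U) (f : U → Fin 3)
    (hcol : ∀ u v, H.Adj u v → f u ≠ f v) :
    ∀ x ∈ greenEdges U ∪ blueEdges H, x ∉ confSet f →
      ∃ e ∈ confSet f, x.1 = e.1 ∨ x.2 = e.2 := by
  intro x hx _
  have h1 : ∀ w : U, ((w, Lbl.m), (w, (pqL (toLbl (f w))).1)) ∈ confSet f :=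
    fun w => ⟨w, Or.inl rfl⟩
  have h2 : ∀ w : U, ((w, Lbl.n), (w, (pqL (toLbl (f w))).2)) ∈ confSet f :=
    fun w => ⟨w, Or.inr (Or.inl rfl)⟩
  have h3 : ∀ w : U, ((w, (pqL (toLbl (f w))).1), (w, Lbl.m)) ∈ confSet f :=
    fun w => ⟨w, Or.inr (Or.inr (Or.inl rfl))⟩
  have h4 : ∀ w : U, ((w, (pqL (toLbl (f w))).2), (w, Lbl.n)) ∈ confSet f :=
    fun w => ⟨w, Or.inr (Or.inr (Or.inr rfl))⟩
  rcases hx with ⟨w, hw⟩ | ⟨w, ε, δ, hε, hδ, hne, hxeq⟩ | ⟨u, w, ε, hε, hadj, hxeq⟩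
  · rcases hw with rfl|rfl|rfl|rfl|rfl|rfl|rfl|rfl
    exacts [⟨_, h1 w, Or.inl rfl⟩, ⟨_, h1 w, Or.inl rfl⟩, ⟨_, h2 w, Or.inl rfl⟩,
      ⟨_, h2 w, Or.inl rfl⟩, ⟨_, h3 w, Or.inr rfl⟩, ⟨_, h3 w, Or.inr rfl⟩,
      ⟨_, h4 w, Or.inr rfl⟩, ⟨_, h4 w, Or.inr rfl⟩]
  · subst hxeq
    simp only [Set.mem_insert_iff, Set.mem_singleton_iff] at hε hδ
    rcases toLbl_cases (f w) with hc|hc|hc <;>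
      rcases hε with rfl|rfl|rfl <;> rcases hδ with h'|h'|h' <;>
      (try subst h') <;> (try exact absurd rfl hne) <;>
      first
        | (refine ⟨_, h1 w, Or.inl ?_⟩; simp [hc, pqL]; done)
        | (refine ⟨_, h1 w, Or.inr ?_⟩; simp [hc, pqL]; done)
        | (refine ⟨_, h2 w, Or.inl ?_⟩; simp [hc, pqL]; done)
        | (refine ⟨_, h2 w, Or.inr ?_⟩; simp [hc, pqL]; done)
        | (refine ⟨_, h3 w, Or.inl ?_⟩; simp [hc, pqL]; done)
        | (refine ⟨_, h3 w, Or.inr ?_⟩; simp [hc, pqL]; done)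
        | (refine ⟨_, h4 w, Or.inl ?_⟩; simp [hc, pqL]; done)
        | (refine ⟨_, h4 w, Or.inr ?_⟩; simp [hc, pqL]; done)
  · subst hxeq
    have hne : toLbl (f u) ≠ toLbl (f w) := fun h => hcol u w hadj (toLbl_inj h)
    simp only [Set.mem_insert_iff, Set.mem_singleton_iff] at hε
    rcases toLbl_cases (f w) with hcw|hcw|hcw <;>
      rcases toLbl_cases (f u) with hcu|hcu|hcu <;>
      (try exact absurd (hcu.trans hcw.symm) hne) <;>
      rcases hε with rfl|rfl|rfl <;>
      first
        | (refine ⟨_, h3 w, Or.inl ?_⟩; simp [hcw, pqL]; done)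
        | (refine ⟨_, h4 w, Or.inl ?_⟩; simp [hcw, pqL]; done)
        | (refine ⟨_, h1 u, Or.inr ?_⟩; simp [hcu, pqL]; done)
        | (refine ⟨_, h2 u, Or.inr ?_⟩; simp [hcu, pqL]; done)

lemma vertex_facts {U : Type*} {H : SimpleGraph U} {M : Set ((U × Lbl) × U × Lbl)}
    (hME : M ⊆ greenEdges U ∪ blueEdges H) (hM : IsVMatching M)
    (hMB : M ∩ blueEdges H = ∅)
    (hmax : ∀ M' ⊆ greenEdges U ∪ blueEdges H, IsVMatching M' → M ⊆ M' → M' = M)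
    (v : U) :
    (((v,Lbl.m),(v,Lbl.b)) ∈ M → ((v,Lbl.r),(v,Lbl.m)) ∉ M ∧ ((v,Lbl.m),(v,Lbl.r)) ∉ M) ∧
    (((v,Lbl.m),(v,Lbl.b)) ∉ M → ((v,Lbl.n),(v,Lbl.b)) ∈ M →
       ((v,Lbl.g),(v,Lbl.n)) ∉ M ∧ ((v,Lbl.n),(v,Lbl.g)) ∉ M) ∧
    (((v,Lbl.m),(v,Lbl.b)) ∉ M → ((v,Lbl.n),(v,Lbl.b)) ∉ M →
       ((v,Lbl.b),(v,Lbl.m)) ∉ M ∧ ((v,Lbl.b),(v,Lbl.n)) ∉ M) := by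
  have notblue : ∀ x ∈ blueEdges H, x ∉ M := by
    intro x hb hm
    have hx : x ∈ M ∩ blueEdges H := ⟨hm, hb⟩
    rw [hMB] at hx
    exact hx
  have hMg : M ⊆ greenEdges U := by
    intro x hx
    rcases hME hx with h | h
    · exact h
    · exact absurd hx (notblue x h)
  -- matching exclusions
  have mx1 : ¬(((v,Lbl.m),(v,Lbl.r)) ∈ M ∧ ((v,Lbl.m),(v,Lbl.b)) ∈ M) := by
    rintro ⟨h1, h2⟩; have := hM _ h1 _ h2 (Or.inl rfl); simp at this
  have mx2 : ¬(((v,Lbl.n),(v,Lbl.b)) ∈ M ∧ ((v,Lbl.n),(v,Lbl.g)) ∈ M) := by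
    rintro ⟨h1, h2⟩; have := hM _ h1 _ h2 (Or.inl rfl); simp at this
  have mx3 : ¬(((v,Lbl.b),(v,Lbl.m)) ∈ M ∧ ((v,Lbl.b),(v,Lbl.n)) ∈ M) := by
    rintro ⟨h1, h2⟩; have := hM _ h1 _ h2 (Or.inl rfl); simp at this
  have mx4 : ¬(((v,Lbl.r),(v,Lbl.m)) ∈ M ∧ ((v,Lbl.b),(v,Lbl.m)) ∈ M) := by
    rintro ⟨h1, h2⟩; have := hM _ h1 _ h2 (Or.inr rfl); simp at this
  have mx5 : ¬(((v,Lbl.b),(v,Lbl.n)) ∈ M ∧ ((v,Lbl.g),(v,Lbl.n)) ∈ M) := by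
    rintro ⟨h1, h2⟩; have := hM _ h1 _ h2 (Or.inr rfl); simp at this
  have mx6 : ¬(((v,Lbl.m),(v,Lbl.b)) ∈ M ∧ ((v,Lbl.n),(v,Lbl.b)) ∈ M) := by
    rintro ⟨h1, h2⟩; have := hM _ h1 _ h2 (Or.inr rfl); simp at this
  -- blocking of the two green edges with unique right endpoints
  have F1 : ((v,Lbl.m),(v,Lbl.r)) ∈ M ∨ ((v,Lbl.m),(v,Lbl.b)) ∈ M := by
    have hxE : ((v,Lbl.m),(v,Lbl.r)) ∈ greenEdges U ∪ blueEdges H := Or.inl ⟨v, Or.inl rfl⟩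
    rcases block_or hME hM hmax hxE with h | ⟨e, heM, hc⟩
    · exact Or.inl h
    · obtain ⟨w, hw⟩ := hMg heM
      rcases hw with rfl|rfl|rfl|rfl|rfl|rfl|rfl|rfl <;>
        simp only [Prod.mk.injEq] at hc <;>
        rcases hc with ⟨rfl, hl⟩ | ⟨rfl, hl⟩ <;> first | exact absurd hl (by decide) | exact Or.inl heM | exact Or.inr heM | exact Or.inr (Or.inl heM) | exact Or.inr (Or.inr heM)
  have F2 : ((v,Lbl.n),(v,Lbl.g)) ∈ M ∨ ((v,Lbl.n),(v,Lbl.b)) ∈ M := by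
    have hxE : ((v,Lbl.n),(v,Lbl.g)) ∈ greenEdges U ∪ blueEdges H := Or.inl ⟨v, Or.inr (Or.inr (Or.inr (Or.inl rfl)))⟩
    rcases block_or hME hM hmax hxE with h | ⟨e, heM, hc⟩
    · exact Or.inl h
    · obtain ⟨w, hw⟩ := hMg heM
      rcases hw with rfl|rfl|rfl|rfl|rfl|rfl|rfl|rfl <;>
        simp only [Prod.mk.injEq] at hc <;>
        rcases hc with ⟨rfl, hl⟩ | ⟨rfl, hl⟩ <;> first | exact absurd hl (by decide) | exact Or.inl heM | exact Or.inr heM | exact Or.inr (Or.inl heM) | exact Or.inr (Or.inr heM)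
  -- blocking of the six within-vertex blue edges
  have blueblock : ∀ ε δ : Lbl, ε ∈ ({Lbl.r, Lbl.g, Lbl.b} : Set Lbl) →
      δ ∈ ({Lbl.r, Lbl.g, Lbl.b} : Set Lbl) → ε ≠ δ →
      ∃ e ∈ M, ((v,ε) : U × Lbl) = e.1 ∨ ((v,δ) : U × Lbl) = e.2 := by
    intro ε δ hε hδ hne
    have hb : (((v,ε),(v,δ)) : (U × Lbl) × U × Lbl) ∈ blueEdges H :=
      Or.inl ⟨v, ε, δ, hε, hδ, hne, rfl⟩
    rcases block_or hME hM hmax (Or.inr hb) with h | ⟨e, heM, hc⟩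
    · exact absurd h (notblue _ hb)
    · exact ⟨e, heM, hc⟩
  have P_gr := blueblock Lbl.g Lbl.r (by simp) (by simp) (by decide)
  have P_rg := blueblock Lbl.r Lbl.g (by simp) (by simp) (by decide)
  have P_rb := blueblock Lbl.r Lbl.b (by simp) (by simp) (by decide)
  have P_gb := blueblock Lbl.g Lbl.b (by simp) (by simp) (by decide)
  have P_br := blueblock Lbl.b Lbl.r (by simp) (by simp) (by decide)
  have P_bg := blueblock Lbl.b Lbl.g (by simp) (by simp) (by decide)
  have Q_gr : ((v,Lbl.g),(v,Lbl.n)) ∈ M ∨ ((v,Lbl.m),(v,Lbl.r)) ∈ M := by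
    obtain ⟨e, heM, hc⟩ := P_gr
    obtain ⟨w, hw⟩ := hMg heM
    rcases hw with rfl|rfl|rfl|rfl|rfl|rfl|rfl|rfl <;>
      simp only [Prod.mk.injEq] at hc <;>
      rcases hc with ⟨rfl, hl⟩ | ⟨rfl, hl⟩ <;> first | exact absurd hl (by decide) | exact Or.inl heM | exact Or.inr heM | exact Or.inr (Or.inl heM) | exact Or.inr (Or.inr heM)
  have Q_rg : ((v,Lbl.r),(v,Lbl.m)) ∈ M ∨ ((v,Lbl.n),(v,Lbl.g)) ∈ M := by
    obtain ⟨e, heM, hc⟩ := P_rg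
    obtain ⟨w, hw⟩ := hMg heM
    rcases hw with rfl|rfl|rfl|rfl|rfl|rfl|rfl|rfl <;>
      simp only [Prod.mk.injEq] at hc <;>
      rcases hc with ⟨rfl, hl⟩ | ⟨rfl, hl⟩ <;> first | exact absurd hl (by decide) | exact Or.inl heM | exact Or.inr heM | exact Or.inr (Or.inl heM) | exact Or.inr (Or.inr heM)
  have Q_rb : ((v,Lbl.r),(v,Lbl.m)) ∈ M ∨ ((v,Lbl.m),(v,Lbl.b)) ∈ M ∨
      ((v,Lbl.n),(v,Lbl.b)) ∈ M := by
    obtain ⟨e, heM, hc⟩ := P_rb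
    obtain ⟨w, hw⟩ := hMg heM
    rcases hw with rfl|rfl|rfl|rfl|rfl|rfl|rfl|rfl <;>
      simp only [Prod.mk.injEq] at hc <;>
      rcases hc with ⟨rfl, hl⟩ | ⟨rfl, hl⟩ <;> first | exact absurd hl (by decide) | exact Or.inl heM | exact Or.inr heM | exact Or.inr (Or.inl heM) | exact Or.inr (Or.inr heM)
  have Q_gb : ((v,Lbl.g),(v,Lbl.n)) ∈ M ∨ ((v,Lbl.m),(v,Lbl.b)) ∈ M ∨
      ((v,Lbl.n),(v,Lbl.b)) ∈ M := by
    obtain ⟨e, heM, hc⟩ := P_gb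
    obtain ⟨w, hw⟩ := hMg heM
    rcases hw with rfl|rfl|rfl|rfl|rfl|rfl|rfl|rfl <;>
      simp only [Prod.mk.injEq] at hc <;>
      rcases hc with ⟨rfl, hl⟩ | ⟨rfl, hl⟩ <;> first | exact absurd hl (by decide) | exact Or.inl heM | exact Or.inr heM | exact Or.inr (Or.inl heM) | exact Or.inr (Or.inr heM)
  have Q_br : ((v,Lbl.b),(v,Lbl.m)) ∈ M ∨ ((v,Lbl.b),(v,Lbl.n)) ∈ M ∨
      ((v,Lbl.m),(v,Lbl.r)) ∈ M := by
    obtain ⟨e, heM, hc⟩ := P_br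
    obtain ⟨w, hw⟩ := hMg heM
    rcases hw with rfl|rfl|rfl|rfl|rfl|rfl|rfl|rfl <;>
      simp only [Prod.mk.injEq] at hc <;>
      rcases hc with ⟨rfl, hl⟩ | ⟨rfl, hl⟩ <;> first | exact absurd hl (by decide) | exact Or.inl heM | exact Or.inr heM | exact Or.inr (Or.inl heM) | exact Or.inr (Or.inr heM)
  have Q_bg : ((v,Lbl.b),(v,Lbl.m)) ∈ M ∨ ((v,Lbl.b),(v,Lbl.n)) ∈ M ∨
      ((v,Lbl.n),(v,Lbl.g)) ∈ M := by
    obtain ⟨e, heM, hc⟩ := P_bg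
    obtain ⟨w, hw⟩ := hMg heM
    rcases hw with rfl|rfl|rfl|rfl|rfl|rfl|rfl|rfl <;>
      simp only [Prod.mk.injEq] at hc <;>
      rcases hc with ⟨rfl, hl⟩ | ⟨rfl, hl⟩ <;> first | exact absurd hl (by decide) | exact Or.inl heM | exact Or.inr heM | exact Or.inr (Or.inl heM) | exact Or.inr (Or.inr heM)
  clear P_gr P_rg P_rb P_gb P_br P_bg
  refine ⟨?_, ?_, ?_⟩
  · intro hB
    have hnA : ((v,Lbl.m),(v,Lbl.r)) ∉ M := fun h => mx1 ⟨h, hB⟩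
    have hnC : ((v,Lbl.n),(v,Lbl.b)) ∉ M := fun h => mx6 ⟨hB, h⟩
    have hH := Q_gr.resolve_right hnA
    have hnG : ((v,Lbl.b),(v,Lbl.n)) ∉ M := fun h => mx5 ⟨h, hH⟩
    have hF := Q_br.resolve_right (fun h => h.elim hnG hnA)
    have hnE : ((v,Lbl.r),(v,Lbl.m)) ∉ M := fun h => mx4 ⟨h, hF⟩
    exact ⟨hnE, hnA⟩
  · intro hnB hC
    have hnD : ((v,Lbl.n),(v,Lbl.g)) ∉ M := fun h => mx2 ⟨hC, h⟩
    have hE := Q_rg.resolve_right hnD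
    have hnF : ((v,Lbl.b),(v,Lbl.m)) ∉ M := fun h => mx4 ⟨hE, h⟩
    have hG := (Q_bg.resolve_left hnF).resolve_right hnD
    have hnH : ((v,Lbl.g),(v,Lbl.n)) ∉ M := fun h => mx5 ⟨hG, h⟩
    exact ⟨hnH, hnD⟩
  · intro hnB hnC
    have hH := Q_gb.resolve_right (fun h => h.elim hnB hnC)
    have hnG : ((v,Lbl.b),(v,Lbl.n)) ∉ M := fun h => mx5 ⟨h, hH⟩
    have hE := Q_rb.resolve_right (fun h => h.elim hnB hnC)
    have hnF : ((v,Lbl.b),(v,Lbl.m)) ∉ M := fun h => mx4 ⟨hE, h⟩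
    exact ⟨hnF, hnG⟩

lemma no_same {U : Type*} {H : SimpleGraph U} {M : Set ((U × Lbl) × U × Lbl)}
    (hME : M ⊆ greenEdges U ∪ blueEdges H) (hM : IsVMatching M)
    (hMB : M ∩ blueEdges H = ∅)
    (hmax : ∀ M' ⊆ greenEdges U ∪ blueEdges H, IsVMatching M' → M ⊆ M' → M' = M)
    (u v : U) (hadj : H.Adj u v) :
    ¬(((v,Lbl.m),(v,Lbl.b)) ∈ M ∧ ((u,Lbl.m),(u,Lbl.b)) ∈ M) ∧
    ¬((((v,Lbl.m),(v,Lbl.b)) ∉ M ∧ ((v,Lbl.n),(v,Lbl.b)) ∈ M) ∧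
      (((u,Lbl.m),(u,Lbl.b)) ∉ M ∧ ((u,Lbl.n),(u,Lbl.b)) ∈ M)) ∧
    ¬((((v,Lbl.m),(v,Lbl.b)) ∉ M ∧ ((v,Lbl.n),(v,Lbl.b)) ∉ M) ∧
      (((u,Lbl.m),(u,Lbl.b)) ∉ M ∧ ((u,Lbl.n),(u,Lbl.b)) ∉ M)) := by
  have notblue : ∀ x ∈ blueEdges H, x ∉ M := by
    intro x hb hm
    have hx : x ∈ M ∩ blueEdges H := ⟨hm, hb⟩
    rw [hMB] at hx
    exact hx
  have hMg : M ⊆ greenEdges U := by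
    intro x hx
    rcases hME hx with h | h
    · exact h
    · exact absurd hx (notblue x h)
  have Fv := vertex_facts hME hM hMB hmax v
  have Fu := vertex_facts hME hM hMB hmax u
  have cross : ∀ ε : Lbl, ε ∈ ({Lbl.r, Lbl.g, Lbl.b} : Set Lbl) →
      ∃ e ∈ M, ((v,ε) : U × Lbl) = e.1 ∨ ((u,ε) : U × Lbl) = e.2 := by
    intro ε hε
    have hb : (((v,ε),(u,ε)) : (U × Lbl) × U × Lbl) ∈ blueEdges H :=
      Or.inr ⟨u, v, ε, hε, hadj, rfl⟩
    rcases block_or hME hM hmax (Or.inr hb) with h | ⟨e, heM, hc⟩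
    · exact absurd h (notblue _ hb)
    · exact ⟨e, heM, hc⟩
  refine ⟨?_, ?_, ?_⟩
  · rintro ⟨hBv, hBu⟩
    obtain ⟨e, heM, hc⟩ := cross Lbl.r (by simp)
    obtain ⟨w, hw⟩ := hMg heM
    rcases hw with rfl|rfl|rfl|rfl|rfl|rfl|rfl|rfl <;>
      simp only [Prod.mk.injEq] at hc <;>
      rcases hc with ⟨rfl, hl⟩ | ⟨rfl, hl⟩ <;>
      first
        | exact absurd hl (by decide)
        | exact absurd heM (Fv.1 hBv).1
        | exact absurd heM (Fu.1 hBu).2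
  · rintro ⟨⟨hnBv, hCv⟩, ⟨hnBu, hCu⟩⟩
    obtain ⟨e, heM, hc⟩ := cross Lbl.g (by simp)
    obtain ⟨w, hw⟩ := hMg heM
    rcases hw with rfl|rfl|rfl|rfl|rfl|rfl|rfl|rfl <;>
      simp only [Prod.mk.injEq] at hc <;>
      rcases hc with ⟨rfl, hl⟩ | ⟨rfl, hl⟩ <;>
      first
        | exact absurd hl (by decide)
        | exact absurd heM (Fv.2.1 hnBv hCv).1
        | exact absurd heM (Fu.2.1 hnBu hCu).2
  · rintro ⟨⟨hnBv, hnCv⟩, ⟨hnBu, hnCu⟩⟩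
    obtain ⟨e, heM, hc⟩ := cross Lbl.b (by simp)
    obtain ⟨w, hw⟩ := hMg heM
    rcases hw with rfl|rfl|rfl|rfl|rfl|rfl|rfl|rfl <;>
      simp only [Prod.mk.injEq] at hc <;>
      rcases hc with ⟨rfl, hl⟩ | ⟨rfl, hl⟩ <;>
      first
        | exact absurd hl (by decide)
        | exact absurd heM (Fv.2.2 hnBv hnCv).1
        | exact absurd heM (Fv.2.2 hnBv hnCv).2
        | exact absurd heM hnBu
        | exact absurd heM hnCu

/-- A finite undirected graph `H` is 3-colorable iff the bipartite edge-colored graph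
`G_H` has the max-V-free property. -/
theorem stmt_3 {U : Type*} [Fintype U] (H : SimpleGraph U) :
    (∃ f : U → Fin 3, ∀ u v, H.Adj u v → f u ≠ f v) ↔
      MaxVFree (greenEdges U ∪ blueEdges H) (blueEdges H) := by
  constructor
  · rintro ⟨f, hcol⟩
    exact ⟨confSet f, fun x hx => Or.inl (conf_sub_green f hx), conf_matching f,
      conf_disjoint H f, maximal_of_blocked (conf_blocked H f hcol)⟩
  · rintro ⟨M, hME, hM, hMB, hmax⟩
    classical
    refine ⟨fun v => if ((v,Lbl.m),(v,Lbl.b)) ∈ M then 0 else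
      if ((v,Lbl.n),(v,Lbl.b)) ∈ M then 1 else 2, ?_⟩
    intro u v hadj h
    obtain ⟨K1, K2, K3⟩ := no_same hME hM hMB hmax u v hadj
    by_cases hBu : ((u,Lbl.m),(u,Lbl.b)) ∈ M <;>
      by_cases hBv : ((v,Lbl.m),(v,Lbl.b)) ∈ M <;>
      by_cases hCu : ((u,Lbl.n),(u,Lbl.b)) ∈ M <;>
      by_cases hCv : ((v,Lbl.n),(v,Lbl.b)) ∈ M <;>
      simp_all
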